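/- arXiv:2409.05970 — 4 statements merged into one kernel-verified Lean document; each statement's English description precedes it below -/
import Mathlib

section
/- Let φ: V → W be a linear map between finite-dimensional real vector spaces and L_W ⊆ W ⊕ W* a maximal isotropic subspace. Then the backward image φ*L_W = {(X, φᵀβ) ∈ V ⊕ V* : (φ(X), β) ∈ L_W} is maximal isotropic, i.e., has dimension dim V. -/
/-!
Write `φ*L = g (f⁻¹ L)` with `f = φ × id` and `g = id × φᵀ`, and put `E = im φ`,
`A = 0 × ann E`. Rank–nullity for `f` and `g` gives
`dim φ*L = dim (L ∩ (E × W*)) + dim ker φ - dim (L ∩ A)`.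
Now `E × W*` is the orthogonal of `A` for the pairing, and a maximal isotropic `L` equals its own
orthogonal, so the identity `dim (L ∩ A^⊥) + dim A = dim L + dim (L^⊥ ∩ A)`, valid for any
nondegenerate reflexive form, turns this into `dim W - dim ann E + dim ker φ = dim V`.
-/

open Module LinearMap Submodule

namespace Submodule

variable {K M N : Type*} [DivisionRing K] [AddCommGroup M] [Module K M] [AddCommGroup N]
  [Module K N]

lemma finrank_map_add_finrank_inf_ker [FiniteDimensional K M] (f : M →ₗ[K] N)
    (p : Submodule K M) :
    finrank K (p.map f) + finrank K ↥(p ⊓ ker f) = finrank K p := by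
  have h := (f.domRestrict p).finrank_range_add_finrank_ker
  rwa [range_domRestrict, ker_domRestrict, ← finrank_map_subtype_eq, map_comap_subtype] at h

lemma finrank_comap_eq [FiniteDimensional K M] (f : M →ₗ[K] N) (q : Submodule K N) :
    finrank K (q.comap f) = finrank K ↥(range f ⊓ q) + finrank K (ker f) := by
  rw [← finrank_map_add_finrank_inf_ker f, map_comap_eq, inf_eq_right.mpr (ker_le_comap f)]

lemma finrank_bot_prod (q : Submodule K N) :
    finrank K ((⊥ : Submodule K M).prod q) = finrank K q := by
  rw [← map_inr]
  exact (q.equivMapOfInjective _ inr_injective).finrank_eq.symm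

lemma finrank_prod_bot (p : Submodule K M) :
    finrank K (p.prod (⊥ : Submodule K N)) = finrank K p := by
  rw [← map_inl]
  exact (p.equivMapOfInjective _ inl_injective).finrank_eq.symm

end Submodule

namespace LinearMap.BilinForm

variable {K M : Type*} [Field K] [AddCommGroup M] [Module K M] {B : LinearMap.BilinForm K M}

lemma orthogonal_sup (N N' : Submodule K M) :
    B.orthogonal (N ⊔ N') = B.orthogonal N ⊓ B.orthogonal N' := by
  ext x
  simp only [mem_orthogonal_iff, mem_inf]
  refine ⟨fun h ↦ ⟨fun n hn ↦ h n (mem_sup_left hn), fun n hn ↦ h n (mem_sup_right hn)⟩,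
    ?_⟩
  rintro ⟨h, h'⟩ _ hy
  obtain ⟨n, hn, n', hn', rfl⟩ := mem_sup.mp hy
  rw [map_add, LinearMap.add_apply, h n hn, h' n' hn', add_zero]

variable [FiniteDimensional K M]

lemma finrank_inf_orthogonal_add_finrank (hB : B.Nondegenerate) (hB₀ : B.IsRefl)
    (L N : Submodule K M) :
    finrank K ↥(L ⊓ B.orthogonal N) + finrank K N
      = finrank K L + finrank K ↥(B.orthogonal L ⊓ N) := by
  have hL : L ⊓ B.orthogonal N = B.orthogonal (B.orthogonal L ⊔ N) := by
    rw [orthogonal_sup, orthogonal_orthogonal hB hB₀]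
  have := finrank_orthogonal hB (B.orthogonal L ⊔ N)
  have := finrank_orthogonal hB L
  have := finrank_sup_add_finrank_inf_eq (B.orthogonal L) N
  have := finrank_le (B.orthogonal L ⊔ N)
  have := finrank_le L
  rw [hL]
  omega

lemma orthogonal_eq_self_of_le_orthogonal (hB : B.Nondegenerate) {L : Submodule K M}
    (hL : L ≤ B.orthogonal L) (hdim : finrank K M = 2 * finrank K L) : B.orthogonal L = L :=
  (eq_of_le_of_finrank_le hL (by rw [finrank_orthogonal hB]; omega)).symm

end LinearMap.BilinForm

section Pairing

variable (K W : Type*) [Field K] [AddCommGroup W] [Module K W]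

noncomputable def pairing : LinearMap.BilinForm K (W × Dual K W) :=
  LinearMap.mk₂ K (fun x y ↦ y.2 x.1 + x.2 y.1)
    (fun _ _ _ ↦ by simp only [Prod.fst_add, Prod.snd_add, map_add, LinearMap.add_apply]; ring)
    (fun _ _ _ ↦ by
      simp only [Prod.smul_fst, Prod.smul_snd, map_smul, LinearMap.smul_apply, smul_eq_mul]; ring)
    (fun _ _ _ ↦ by simp only [Prod.fst_add, Prod.snd_add, map_add, LinearMap.add_apply]; ring)
    (fun _ _ _ ↦ by
      simp only [Prod.smul_fst, Prod.smul_snd, map_smul, LinearMap.smul_apply, smul_eq_mul]; ring)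

variable {K W}

@[simp] lemma pairing_apply (x y : W × Dual K W) : pairing K W x y = y.2 x.1 + x.2 y.1 := rfl

lemma pairing_isRefl : (pairing K W).IsRefl := fun x y h ↦ by
  rw [pairing_apply] at h ⊢
  rwa [add_comm]

lemma pairing_nondegenerate [FiniteDimensional K W] : (pairing K W).Nondegenerate := by
  refine (IsRefl.nondegenerate_iff_separatingLeft (B := pairing K W) pairing_isRefl).mpr
    fun x hx ↦ Prod.ext ?_ ?_
  · refine (forall_dual_apply_eq_zero_iff K x.1).mp fun γ ↦ ?_
    simpa using hx (0, γ)
  · ext v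
    simpa using hx (v, 0)

lemma pairing_orthogonal_bot_prod (Q : Submodule K (Dual K W)) :
    (pairing K W).orthogonal ((⊥ : Submodule K W).prod Q) = Q.dualCoannihilator.prod ⊤ := by
  ext x
  simp only [BilinForm.mem_orthogonal_iff, mem_prod, mem_bot, mem_top, and_true,
    mem_dualCoannihilator, Prod.forall, pairing_apply]
  refine ⟨fun h γ hγ ↦ by simpa using h 0 γ ⟨rfl, hγ⟩, ?_⟩
  rintro h _ γ ⟨rfl, hγ⟩
  rw [map_zero, h γ hγ, zero_add]

end Pairing

section BackwardImage

variable {K V W N : Type*} [Field K] [AddCommGroup V] [Module K V] [AddCommGroup W] [Module K W]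
  [AddCommGroup N] [Module K N]

def backwardImage (φ : V →ₗ[K] W) (L : Submodule K (W × Dual K W)) :
    Submodule K (V × Dual K V) :=
  (L.comap (φ.prodMap LinearMap.id)).map (LinearMap.id.prodMap φ.dualMap)

lemma comap_prodMap_id_inf_bot_prod (φ : V →ₗ[K] W) (L : Submodule K (W × N))
    (Q : Submodule K N) :
    L.comap (φ.prodMap LinearMap.id) ⊓ (⊥ : Submodule K V).prod Q
      = (⊥ : Submodule K V).prod (L.comap (inr K W N) ⊓ Q) := by
  ext ⟨v, β⟩
  simp only [mem_inf, mem_comap, mem_prod, mem_bot, prodMap_apply, id_coe, id_eq, inr_apply]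
  constructor
  · rintro ⟨hL, rfl, hβ⟩
    exact ⟨rfl, by simpa using hL, hβ⟩
  · rintro ⟨rfl, hL, hβ⟩
    exact ⟨by simpa using hL, rfl, hβ⟩

theorem finrank_backwardImage [FiniteDimensional K V] [FiniteDimensional K W] (φ : V →ₗ[K] W)
    {L : Submodule K (W × Dual K W)} (hiso : L ≤ (pairing K W).orthogonal L)
    (hdim : finrank K L = finrank K W) :
    finrank K (backwardImage φ L) = finrank K V := by
  have hφ := φ.finrank_range_add_finrank_ker
  unfold backwardImage
  set E := range φ
  set A := (⊥ : Submodule K W).prod E.dualAnnihilator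
  set P := L.comap (φ.prodMap LinearMap.id)
  have hL : (pairing K W).orthogonal L = L :=
    BilinForm.orthogonal_eq_self_of_le_orthogonal pairing_nondegenerate hiso
      (by rw [finrank_prod, Subspace.dual_finrank_eq, hdim, two_mul])
  have hP : finrank K P = finrank K ↥(L ⊓ (pairing K W).orthogonal A) + finrank K (ker φ) := by
    rw [finrank_comap_eq, range_prodMap, range_id, ker_prodMap, ker_id, finrank_prod_bot,
      pairing_orthogonal_bot_prod, Subspace.dualAnnihilator_dualCoannihilator_eq, inf_comm]
  have hLA : L ⊓ A = (⊥ : Submodule K W).prod (L.comap (inr K W _) ⊓ E.dualAnnihilator) := by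
    simpa using comap_prodMap_id_inf_bot_prod LinearMap.id L E.dualAnnihilator
  have hPker :
      finrank K ↥(P ⊓ ker (LinearMap.id.prodMap φ.dualMap)) = finrank K ↥(L ⊓ A) := by
    rw [ker_prodMap, ker_id, ker_dualMap_eq_dualAnnihilator_range, comap_prodMap_id_inf_bot_prod,
      finrank_bot_prod, hLA, finrank_bot_prod]
  have hrank :=
    BilinForm.finrank_inf_orthogonal_add_finrank pairing_nondegenerate pairing_isRefl L A
  rw [hL, finrank_bot_prod] at hrank
  have hg := finrank_map_add_finrank_inf_ker (LinearMap.id.prodMap φ.dualMap) P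
  have hann := Subspace.finrank_add_finrank_dualAnnihilator_eq E
  omega

end BackwardImage

/-- The backward image of a maximal isotropic subspace `L_W ⊆ W ⊕ W*` under a
linear map `φ : V → W` is maximal isotropic: it has dimension `dim V`. -/
theorem stmt_6 (V W : Type*) [AddCommGroup V] [Module ℝ V] [FiniteDimensional ℝ V]
    [AddCommGroup W] [Module ℝ W] [FiniteDimensional ℝ W]
    (φ : V →ₗ[ℝ] W) (LW : Submodule ℝ (W × Module.Dual ℝ W))
    (hiso : ∀ a ∈ LW, ∀ b ∈ LW, b.2 a.1 + a.2 b.1 = 0)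
    (hdim : Module.finrank ℝ LW = Module.finrank ℝ W) :
    Module.finrank ℝ
      (Submodule.map
        (LinearMap.prodMap (LinearMap.id : V →ₗ[ℝ] V) φ.dualMap)
        (Submodule.comap
          (LinearMap.prodMap φ (LinearMap.id : Module.Dual ℝ W →ₗ[ℝ] Module.Dual ℝ W)) LW))
      = Module.finrank ℝ V :=
  finrank_backwardImage φ (fun b hb a ha ↦ hiso a ha b hb) hdim
end

section
/- Let V be a finite-dimensional real vector space and let F ⊆ V be a subspace equipped with an antisymmetric bilinear form ω_F on F. Then L := {(X, α) ∈ V ⊕ V* : X ∈ F and α|_F = -ω_F(X,·)} is a maximal isotropic subspace of V ⊕ V*, of dimension dim V, whose projection to V is F. -/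
/-!
`L` is the image, under the injective map `F × V* → V × V*`, of the kernel of
`(X, α) ↦ α|_F + ω_F(X, ·) : F × V* → F*`. This map is onto because every functional on `F`
extends to `V`, so by rank–nullity `dim L = (dim F + dim V) - dim F = dim V`. Isotropy is
antisymmetry: for `(X, α), (Y, β) ∈ L`, `β(X) + α(Y) = -ω_F(Y, X) - ω_F(X, Y) = 0`.
-/

open Module

namespace Submodule

variable {K V : Type*} [Field K] [AddCommGroup V] [Module K V]
  (F : Submodule K V) (ω : F →ₗ[K] F →ₗ[K] K)

def diracConstraint : F × Dual K V →ₗ[K] Dual K F :=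
  F.subtype.dualMap ∘ₗ LinearMap.snd K F (Dual K V) + ω ∘ₗ LinearMap.fst K F (Dual K V)

def diracSubspace : Submodule K (V × Dual K V) :=
  (F.diracConstraint ω).ker.map (F.subtype.prodMap LinearMap.id)

variable {F ω}

theorem diracConstraint_surjective : Function.Surjective (F.diracConstraint ω) := by
  intro φ
  obtain ⟨α, hα⟩ := LinearMap.dualMap_surjective_of_injective F.injective_subtype φ
  exact ⟨(0, α), by simpa [diracConstraint] using hα⟩

theorem mem_diracSubspace {p : V × Dual K V} :
    p ∈ F.diracSubspace ω ↔ ∃ hX : p.1 ∈ F, ∀ Y : F, p.2 Y = -ω ⟨p.1, hX⟩ Y := by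
  constructor
  · rintro ⟨⟨X, α⟩, hker, rfl⟩
    refine ⟨X.2, fun Y => ?_⟩
    have := LinearMap.congr_fun (LinearMap.mem_ker.mp hker) Y
    simp only [diracConstraint, LinearMap.add_apply, LinearMap.comp_apply, LinearMap.snd_apply,
      LinearMap.fst_apply, LinearMap.dualMap_apply, LinearMap.zero_apply] at this
    simpa using eq_neg_of_add_eq_zero_left this
  · rintro ⟨hX, hα⟩
    refine ⟨(⟨p.1, hX⟩, p.2), LinearMap.mem_ker.mpr (LinearMap.ext fun Y => ?_), rfl⟩
    simp [diracConstraint, hα Y]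

theorem map_fst_diracSubspace : (F.diracSubspace ω).map (LinearMap.fst K V (Dual K V)) = F := by
  refine le_antisymm ?_ fun X hX => ?_
  · rintro _ ⟨p, hp, rfl⟩
    exact (mem_diracSubspace.mp hp).1
  · obtain ⟨α, hα⟩ :=
      LinearMap.dualMap_surjective_of_injective F.injective_subtype (-ω ⟨X, hX⟩)
    refine ⟨(X, α), mem_diracSubspace.mpr ⟨hX, fun Y => ?_⟩, rfl⟩
    simpa using LinearMap.congr_fun hα Y

theorem finrank_diracSubspace [FiniteDimensional K V] :
    finrank K (F.diracSubspace ω) = finrank K V := by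
  have hinj : Function.Injective (F.subtype.prodMap (LinearMap.id : Dual K V →ₗ[K] Dual K V)) :=
    Prod.map_injective.mpr ⟨F.injective_subtype, Function.injective_id⟩
  have hrank := (F.diracConstraint ω).finrank_range_add_finrank_ker
  rw [LinearMap.range_eq_top.mpr diracConstraint_surjective, finrank_top,
    Subspace.dual_finrank_eq, finrank_prod, Subspace.dual_finrank_eq] at hrank
  rw [diracSubspace, ← (equivMapOfInjective _ hinj _).finrank_eq]
  omega

theorem diracSubspace_isotropic (hω : ∀ X Y : F, ω X Y = -ω Y X) :
    ∀ a ∈ F.diracSubspace ω, ∀ b ∈ F.diracSubspace ω, b.2 a.1 + a.2 b.1 = 0 := by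
  rintro a ha b hb
  obtain ⟨haF, hα⟩ := mem_diracSubspace.mp ha
  obtain ⟨hbF, hβ⟩ := mem_diracSubspace.mp hb
  rw [hβ ⟨a.1, haF⟩, hα ⟨b.1, hbF⟩, hω]
  ring

end Submodule

/-- From a pair `(F, ω_F)` with `F ⊆ V` and `ω_F` antisymmetric bilinear on `F`, the set
`L = {(X,α) : X ∈ F, α|_F = -ω_F(X,·)}` is a maximal isotropic subspace of `V ⊕ V*`
of dimension `dim V`, whose projection to `V` is `F`. -/
theorem stmt_11 (V : Type*) [AddCommGroup V] [Module ℝ V] [FiniteDimensional ℝ V]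
    (F : Submodule ℝ V) (ω : F →ₗ[ℝ] F →ₗ[ℝ] ℝ)
    (hanti : ∀ X Y : F, ω X Y = - ω Y X) :
    ∃ L : Submodule ℝ (V × Module.Dual ℝ V),
      (L : Set (V × Module.Dual ℝ V)) =
        {p | ∃ hX : p.1 ∈ F, ∀ Y : F, p.2 (Y : V) = - ω ⟨p.1, hX⟩ Y} ∧
      (∀ a ∈ L, ∀ b ∈ L, b.2 a.1 + a.2 b.1 = 0) ∧
      Module.finrank ℝ L = Module.finrank ℝ V ∧
      Submodule.map (LinearMap.fst ℝ V (Module.Dual ℝ V)) L = F :=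
  ⟨F.diracSubspace ω, Set.ext fun _ => Submodule.mem_diracSubspace,
    Submodule.diracSubspace_isotropic hanti, Submodule.finrank_diracSubspace,
    Submodule.map_fst_diracSubspace⟩
end

section
/- Let V, W, U be finite-dimensional real vector spaces, L_V ⊆ V ⊕ V*, L_W ⊆ W ⊕ W*, L_U ⊆ U ⊕ U* maximal isotropic subspaces, and let φ: V → W be surjective linear with φ*L_V = L_W (forward image), and ϱ: V → U linear with ϱ*L_U = L_V (backward image). Suppose (F_i, ω_i) are pairs representing each L_i (so L_V = {(X,α) : X ∈ F_V, α|_{F_V} = -ω_V(X,·)}, etc.), and that F_V ∩ ker φ ⊆ K_{L_V} where K_{L_V} = {X : (X,0) ∈ L_V}. Let U_φ be the subspace of all X ∈ F_V such that there exists α ∈ W* with (φ(X),α) ∈ L_W and (X', φᵀα) ∈ L_V for some X' with φ(X') = φ(X). Then for all X, Y ∈ U_φ one has ω_W(φ(X), φ(Y)) = ω_U(ϱ(X), ϱ(Y)). -/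
/-- Proposition 2.7: let `L_V, L_W, L_U` be maximal isotropic subspaces represented by
pairs `(F_V, ω_V)`, `(F_W, ω_W)`, `(F_U, ω_U)`; let `φ : V → W` be surjective with
forward image `φ*L_V = L_W`, and `ϱ : V → U` with backward image `ϱ*L_U = L_V`.
If `F_V ∩ ker φ ⊆ K_{L_V}`, then for all `X, Y` in the distribution `U_φ`,
`ω_W(φ X, φ Y) = ω_U(ϱ X, ϱ Y)`. -/
theorem stmt_15 (V W U : Type*)
    [AddCommGroup V] [Module ℝ V] [FiniteDimensional ℝ V]
    [AddCommGroup W] [Module ℝ W] [FiniteDimensional ℝ W]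
    [AddCommGroup U] [Module ℝ U] [FiniteDimensional ℝ U]
    (φ : V →ₗ[ℝ] W) (hsurj : Function.Surjective φ) (ϱ : V →ₗ[ℝ] U)
    (LV : Submodule ℝ (V × Module.Dual ℝ V))
    (LW : Submodule ℝ (W × Module.Dual ℝ W))
    (LU : Submodule ℝ (U × Module.Dual ℝ U))
    -- maximal isotropy
    (hisoV : ∀ a ∈ LV, ∀ b ∈ LV, b.2 a.1 + a.2 b.1 = 0)
    (hdimV : Module.finrank ℝ LV = Module.finrank ℝ V)
    (hisoW : ∀ a ∈ LW, ∀ b ∈ LW, b.2 a.1 + a.2 b.1 = 0)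
    (hdimW : Module.finrank ℝ LW = Module.finrank ℝ W)
    (hisoU : ∀ a ∈ LU, ∀ b ∈ LU, b.2 a.1 + a.2 b.1 = 0)
    (hdimU : Module.finrank ℝ LU = Module.finrank ℝ U)
    -- representing pairs (F_i, ω_i), with ω_i antisymmetric bilinear forms
    (FV : Submodule ℝ V) (FW : Submodule ℝ W) (FU : Submodule ℝ U)
    (ωV : V →ₗ[ℝ] V →ₗ[ℝ] ℝ) (ωW : W →ₗ[ℝ] W →ₗ[ℝ] ℝ) (ωU : U →ₗ[ℝ] U →ₗ[ℝ] ℝ)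
    (hωV : ∀ X Y : V, ωV X Y = - ωV Y X)
    (hωW : ∀ X Y : W, ωW X Y = - ωW Y X)
    (hωU : ∀ X Y : U, ωU X Y = - ωU Y X)
    (hLV : ∀ p : V × Module.Dual ℝ V,
      p ∈ LV ↔ p.1 ∈ FV ∧ ∀ Y ∈ FV, p.2 Y = - ωV p.1 Y)
    (hLW : ∀ p : W × Module.Dual ℝ W,
      p ∈ LW ↔ p.1 ∈ FW ∧ ∀ Y ∈ FW, p.2 Y = - ωW p.1 Y)
    (hLU : ∀ p : U × Module.Dual ℝ U,
      p ∈ LU ↔ p.1 ∈ FU ∧ ∀ Y ∈ FU, p.2 Y = - ωU p.1 Y)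
    -- φ is a forward-Dirac map: φ*L_V = L_W
    (hfwd : Submodule.map
        (LinearMap.prodMap φ (LinearMap.id : Module.Dual ℝ W →ₗ[ℝ] Module.Dual ℝ W))
        (Submodule.comap
          (LinearMap.prodMap (LinearMap.id : V →ₗ[ℝ] V) φ.dualMap) LV) = LW)
    -- ϱ is a backward-Dirac map: ϱ*L_U = L_V
    (hbwd : Submodule.map
        (LinearMap.prodMap (LinearMap.id : V →ₗ[ℝ] V) ϱ.dualMap)
        (Submodule.comap
          (LinearMap.prodMap ϱ (LinearMap.id : Module.Dual ℝ U →ₗ[ℝ] Module.Dual ℝ U)) LU) = LV)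
    -- F_V ∩ ker φ ⊆ K_{L_V}
    (hker : ∀ X : V, X ∈ FV → φ X = 0 → (X, (0 : Module.Dual ℝ V)) ∈ LV) :
    ∀ X Y : V,
      (X ∈ FV ∧ ∃ α : Module.Dual ℝ W, (φ X, α) ∈ LW ∧
        ∃ X' : V, φ X' = φ X ∧ (X', φ.dualMap α) ∈ LV) →
      (Y ∈ FV ∧ ∃ β : Module.Dual ℝ W, (φ Y, β) ∈ LW ∧
        ∃ Y' : V, φ Y' = φ Y ∧ (Y', φ.dualMap β) ∈ LV) →
      ωW (φ X) (φ Y) = ωU (ϱ X) (ϱ Y) := by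

  rintro X Y ⟨hX, α, hαW, X', hX'eq, hX'V⟩ ⟨hY, β, hβW, Y', hY'eq, hY'V⟩
  -- upgrade X', Y' to X, Y
  have hX'F : X' ∈ FV := ((hLV _).mp hX'V).1
  have hY'F : Y' ∈ FV := ((hLV _).mp hY'V).1
  have hdX : (X - X', (0 : Module.Dual ℝ V)) ∈ LV :=
    hker _ (sub_mem hX hX'F) (by simp [map_sub, hX'eq])
  have hdY : (Y - Y', (0 : Module.Dual ℝ V)) ∈ LV :=
    hker _ (sub_mem hY hY'F) (by simp [map_sub, hY'eq])
  have hXV : (X, φ.dualMap α) ∈ LV := by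
    have := LV.add_mem hX'V hdX
    simpa using this
  have hYV : (Y, φ.dualMap β) ∈ LV := by
    have := LV.add_mem hY'V hdY
    simpa using this
  -- pull back through ϱ
  rw [← hbwd] at hXV hYV
  obtain ⟨⟨Z, γ⟩, hZU, hZeq⟩ := hXV
  obtain ⟨⟨Z', δ⟩, hZ'U, hZ'eq⟩ := hYV
  simp only [LinearMap.prodMap_apply, LinearMap.id_apply, Prod.mk.injEq] at hZeq hZ'eq
  obtain ⟨hZ1, hZ2⟩ := hZeq
  obtain ⟨hZ'1, hZ'2⟩ := hZ'eq
  rw [hZ1] at hZU; rw [hZ'1] at hZ'U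
  -- memberships
  have hφYF : φ Y ∈ FW := ((hLW _).mp hβW).1
  have hϱYF : ϱ Y ∈ FU := ((hLU _).mp hZ'U).1
  have h1 : α (φ Y) = - ωW (φ X) (φ Y) := ((hLW _).mp hαW).2 _ hφYF
  have h2 : γ (ϱ Y) = - ωU (ϱ X) (ϱ Y) := ((hLU _).mp hZU).2 _ hϱYF
  have h3 : α (φ Y) = γ (ϱ Y) := by
    have := congrFun (congrArg (fun f : Module.Dual ℝ V => (f : V → ℝ)) hZ2) Y
    simpa [LinearMap.dualMap_apply] using this.symm
  rw [← neg_inj, ← h1, h3, h2]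
end

section
/- Let V be a finite-dimensional real vector space with a nondegenerate symmetric bilinear form κ (an inner product), and let D, S̃, S ⊆ V be subspaces with S̃ ⊆ D, S ⊆ V, and S̃⊥ ∩ S = {0} (orthogonal complement with respect to κ). Set H̃ := D ∩ S̃⊥. Then D = S̃ ⊕ H̃; moreover, if additionally V = D + Vv for a subspace Vv with S = D ∩ Vv, then H̃ ∩ Vv = {0} and V = H̃ ⊕ Vv. -/
/-!
`H̃ = D ⊓ S̃ᗮ` is the orthogonal complement of `S̃` inside `D`, which gives `D = S̃ ⊕ H̃`.
It meets `Vv` only in `S̃ᗮ ⊓ (D ⊓ Vv) = S̃ᗮ ⊓ S = 0`, and it has dimension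
`dim D - dim S̃ = dim D - dim (D ⊓ Vv) = dim V - dim Vv`, so `H̃` and `Vv` are complementary.
-/

open Module

theorem Submodule.finrank_add_finrank_eq_of_sup_eq_top {K V : Type*} [DivisionRing K]
    [AddCommGroup V] [Module K V] [FiniteDimensional K V] {D W H : Submodule K V}
    (hDW : D ⊔ W = ⊤) (hH : finrank K H + finrank K (D ⊓ W : Submodule K V) = finrank K D) :
    finrank K H + finrank K W = finrank K V := by
  have := finrank_sup_add_finrank_inf_eq D W
  rw [hDW, finrank_top] at this
  omega

/-- Lemma 5.3 (linear algebra): in an inner product space, if `S̃ ⊆ D`,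
`S̃⊥ ∩ S = {0}` and `dim S̃ = dim S`, then with `H̃ := D ∩ S̃⊥` we have
`D = S̃ ⊕ H̃`; moreover if `V = D + Vv` with `S = D ∩ Vv`, then
`H̃ ∩ Vv = {0}` and `V = H̃ ⊕ Vv`. -/
theorem stmt_16 {V : Type*} [NormedAddCommGroup V] [InnerProductSpace ℝ V]
    [FiniteDimensional ℝ V]
    (D St S Vv : Submodule ℝ V)
    (hStD : St ≤ D)
    (hperp : Stᗮ ⊓ S = ⊥)
    (hdim : Module.finrank ℝ St = Module.finrank ℝ S) :
    (Disjoint St (D ⊓ Stᗮ) ∧ St ⊔ (D ⊓ Stᗮ) = D) ∧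
    ((D ⊔ Vv = ⊤) → (S = D ⊓ Vv) →
      ((D ⊓ Stᗮ) ⊓ Vv = ⊥ ∧ (D ⊓ Stᗮ) ⊔ Vv = ⊤)) := by
  refine ⟨⟨St.orthogonal_disjoint.mono_right inf_le_right, ?_⟩, fun hDVv hS => ?_⟩
  · rw [inf_comm]
    exact Submodule.sup_orthogonal_inf_of_hasOrthogonalProjection hStD
  have hHVv : (D ⊓ Stᗮ) ⊓ Vv = ⊥ := by
    rw [inf_comm D, inf_assoc, ← hS, hperp]
  have hfinrank_H : finrank ℝ (D ⊓ Stᗮ : Submodule ℝ V) + finrank ℝ (D ⊓ Vv : Submodule ℝ V)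
      = finrank ℝ D := by
    rw [← hS, ← hdim, add_comm, inf_comm]
    exact Submodule.finrank_add_inf_finrank_orthogonal hStD
  refine ⟨hHVv, Submodule.eq_top_of_disjoint _ _ ?_ (disjoint_iff.mpr hHVv)⟩
  exact (Submodule.finrank_add_finrank_eq_of_sup_eq_top hDVv hfinrank_H).ge
end
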